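/- arXiv:2503.15280 — 3 statements merged into one kernel-verified Lean document; each statement's English description precedes it below -/
import Mathlib

section
/- Let C be a self-adjoint nonnegative operator in a Hilbert space H, let A be a linear operator with D(C) ⊆ D(A) and ‖A u‖² ≤ K(‖u‖² + ‖C u‖²) for all u ∈ D(C), and let B be a densely defined operator with D(C) ⊆ D(B*). Let x, y be sequences with x(n), y(n) ∈ D(C), ∑ₙ(‖x(n)‖² + ‖C x(n)‖²) < ∞ and ∑ₙ(‖y(n)‖² + ‖C y(n)‖²) < ∞, and set ρ = ∑ₙ |x(n)⟩⟨y(n)|. Then A ρ B (defined on D(B)) has a unique bounded extension equal to ∑ₙ |A x(n)⟩⟨B* y(n)|, and this extension is trace class. -/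
/-!
The graph of the closed operator `C` is a Hilbert space on which `A` (by the relative bound) and
`B*` (by the closed graph theorem) act as bounded operators. Hence `‖A x(n)‖` and `‖B* y(n)‖` are
square-summable, so `∑ₙ |A x(n)⟩⟨B* y(n)|` converges absolutely, and has finite trace norm because
each rank-one term has trace norm at most `‖A x(n)‖ ‖B* y(n)‖`. For `z ∈ D(B)` the series
`ρ B z = ∑ₙ ⟪B* y(n), z⟫ x(n)` converges in the graph norm of `C`, so `A` may be applied termwise;
uniqueness follows from the density of `D(B)`.
-/

open Filter Topology
open scoped ENNReal NNReal

variable {H : Type*} [NormedAddCommGroup H] [InnerProductSpace ℂ H] [CompleteSpace H]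

/-- The rank-one operator `|φ⟩⟨ψ| : ξ ↦ ⟪ψ, ξ⟫ φ`. -/
noncomputable def rankOne (φ ψ : H) : H →L[ℂ] H := (innerSL ℂ ψ).smulRight φ

/-- The trace norm, via its variational characterization as the supremum over finite
orthonormal families `(e_k)`, `(f_k)` of `∑ₖ |⟪e_k, A f_k⟫|`; it is finite exactly for
trace-class operators `A`. -/
noncomputable def traceNorm (A : H →L[ℂ] H) : ℝ≥0∞ :=
  ⨆ (n : ℕ) (e : Fin n → H) (f : Fin n → H) (_ : Orthonormal ℂ e) (_ : Orthonormal ℂ f),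
    ∑ k, (‖(inner ℂ (e k) (A (f k)) : ℂ)‖₊ : ℝ≥0∞)

theorem summable_mul_of_summable_sq {ι : Type*} {a b : ι → ℝ}
    (ha : Summable fun i => a i ^ 2) (hb : Summable fun i => b i ^ 2) :
    Summable fun i => a i * b i := by
  refine ((ha.add hb).div_const 2).of_norm_bounded fun i => ?_
  rw [Real.norm_eq_abs, abs_mul]
  nlinarith [two_mul_le_add_sq |a i| |b i|, sq_abs (a i), sq_abs (b i)]

theorem ContinuousLinearMap.summable_sq_norm_apply {𝕜 E F ι : Type*} [NontriviallyNormedField 𝕜]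
    [SeminormedAddCommGroup E] [NormedSpace 𝕜 E] [SeminormedAddCommGroup F] [NormedSpace 𝕜 F]
    (Φ : E →L[𝕜] F) {g : ι → E} (hg : Summable fun i => ‖g i‖ ^ 2) :
    Summable fun i => ‖Φ (g i)‖ ^ 2 :=
  (hg.mul_left (‖Φ‖ ^ 2)).of_nonneg_of_le (fun _ => sq_nonneg _) fun i => by
    rw [← mul_pow]
    exact pow_le_pow_left₀ (norm_nonneg _) (Φ.le_opNorm _) 2

omit [CompleteSpace H] in
theorem rankOne_apply (φ ψ ξ : H) : rankOne φ ψ ξ = inner ℂ ψ ξ • φ := rfl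

omit [CompleteSpace H] in
theorem norm_rankOne (φ ψ : H) : ‖rankOne φ ψ‖ = ‖φ‖ * ‖ψ‖ := by
  rw [rankOne, ContinuousLinearMap.norm_smulRight_apply, innerSL_apply_norm, mul_comm]

theorem summable_rankOne {a b : ℕ → H} (h : Summable fun n => ‖a n‖ * ‖b n‖) :
    Summable fun n => rankOne (a n) (b n) :=
  h.of_norm_bounded fun _ => (norm_rankOne _ _).le

omit [CompleteSpace H] in
theorem traceNorm_rankOne_le (φ ψ : H) : traceNorm (rankOne φ ψ) ≤ ‖φ‖ₑ * ‖ψ‖ₑ := by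
  refine iSup_le fun m => iSup_le fun e => iSup_le fun f => iSup_le fun he => iSup_le fun hf => ?_
  have hbessel_φ : √(∑ k, ‖inner ℂ (e k) φ‖ ^ 2) ≤ ‖φ‖ :=
    (Real.sqrt_le_left (norm_nonneg _)).mpr (he.sum_inner_products_le φ)
  have hbessel_ψ : √(∑ k, ‖inner ℂ (f k) ψ‖ ^ 2) ≤ ‖ψ‖ :=
    (Real.sqrt_le_left (norm_nonneg _)).mpr (hf.sum_inner_products_le ψ)
  have hsum : ∑ k, ‖inner ℂ (e k) (rankOne φ ψ (f k))‖ ≤ ‖φ‖ * ‖ψ‖ := calc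
    _ = ∑ k, ‖inner ℂ (e k) φ‖ * ‖inner ℂ (f k) ψ‖ := by
      refine Finset.sum_congr rfl fun k _ => ?_
      rw [rankOne_apply, inner_smul_right, norm_mul, norm_inner_symm, mul_comm]
    _ ≤ √(∑ k, ‖inner ℂ (e k) φ‖ ^ 2) * √(∑ k, ‖inner ℂ (f k) ψ‖ ^ 2) :=
      Real.sum_mul_le_sqrt_mul_sqrt _ _ _
    _ ≤ ‖φ‖ * ‖ψ‖ := mul_le_mul hbessel_φ hbessel_ψ (Real.sqrt_nonneg _) (norm_nonneg _)
  calc ∑ k, (‖inner ℂ (e k) (rankOne φ ψ (f k))‖₊ : ℝ≥0∞)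
      = ENNReal.ofReal (∑ k, ‖inner ℂ (e k) (rankOne φ ψ (f k))‖) := by
        rw [ENNReal.ofReal_sum_of_nonneg fun k _ => norm_nonneg _]
        simp only [ofReal_norm]
        rfl
    _ ≤ ENNReal.ofReal (‖φ‖ * ‖ψ‖) := ENNReal.ofReal_le_ofReal hsum
    _ = ‖φ‖ₑ * ‖ψ‖ₑ := by rw [ENNReal.ofReal_mul (norm_nonneg _), ofReal_norm, ofReal_norm]

omit [CompleteSpace H] in
theorem traceNorm_le_tsum_of_hasSum {S : ℕ → H →L[ℂ] H} {T : H →L[ℂ] H} (hS : HasSum S T) :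
    traceNorm T ≤ ∑' n, traceNorm (S n) := by
  refine iSup_le fun m => iSup_le fun e => iSup_le fun f => iSup_le fun he => iSup_le fun hf => ?_
  have hentry : ∀ k, HasSum (fun n => inner ℂ (e k) (S n (f k))) (inner ℂ (e k) (T (f k))) :=
    fun k => (hS.mapL (ContinuousLinearMap.apply ℂ H (f k))).mapL (innerSL ℂ (e k))
  calc ∑ k, (‖inner ℂ (e k) (T (f k))‖₊ : ℝ≥0∞)
      ≤ ∑ k, ∑' n, ‖inner ℂ (e k) (S n (f k))‖ₑ := Finset.sum_le_sum fun k _ => by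
        rw [← (hentry k).tsum_eq]; exact enorm_tsum_le_tsum_enorm
    _ = ∑' n, ∑ k, ‖inner ℂ (e k) (S n (f k))‖ₑ :=
        (Summable.tsum_finsetSum fun _ _ => ENNReal.summable).symm
    _ ≤ ∑' n, traceNorm (S n) := ENNReal.tsum_le_tsum fun n =>
        le_iSup_of_le m <| le_iSup_of_le e <| le_iSup_of_le f <| le_iSup_of_le he <|
          le_iSup_of_le hf le_rfl

omit [CompleteSpace H] in
theorem traceNorm_ne_top_of_hasSum_rankOne {a b : ℕ → H} {T : H →L[ℂ] H}
    (hT : HasSum (fun n => rankOne (a n) (b n)) T) (h : Summable fun n => ‖a n‖ * ‖b n‖) :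
    traceNorm T ≠ ⊤ := by
  refine ne_top_of_le_ne_top ?_ ((traceNorm_le_tsum_of_hasSum hT).trans
    (ENNReal.tsum_le_tsum fun n => traceNorm_rankOne_le (a n) (b n)))
  have hnn : Summable fun n => ‖a n‖₊ * ‖b n‖₊ := NNReal.summable_coe.mp (by simpa using h)
  simpa only [enorm, ENNReal.coe_mul] using ENNReal.tsum_coe_ne_top_iff_summable.mpr hnn

namespace LinearPMap

variable {𝕜 E F G : Type*} [NontriviallyNormedField 𝕜]
  [NormedAddCommGroup E] [NormedSpace 𝕜 E] [NormedAddCommGroup F] [NormedSpace 𝕜 F]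
  [NormedAddCommGroup G] [NormedSpace 𝕜 G]

def graphToDomain (C : E →ₗ.[𝕜] F) : C.graph →ₗ[𝕜] C.domain :=
  (LinearMap.fst 𝕜 E F ∘ₗ C.graph.subtype).codRestrict C.domain fun g =>
    mem_domain_of_mem_graph g.2

/-- Continuity of `D.onGraph hdom` is relative boundedness of `D` with respect to `C`. -/
def onGraph (D : E →ₗ.[𝕜] G) {C : E →ₗ.[𝕜] F} (hdom : C.domain ≤ D.domain) : C.graph →ₗ[𝕜] G :=
  D.toFun ∘ₗ Submodule.inclusion hdom ∘ₗ C.graphToDomain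

variable {D : E →ₗ.[𝕜] G} {C : E →ₗ.[𝕜] F} {hdom : C.domain ≤ D.domain}

theorem onGraph_mem_graph (g : C.graph) : ((g : E × F).1, D.onGraph hdom g) ∈ D.graph :=
  D.mem_graph ⟨(g : E × F).1, hdom (mem_domain_of_mem_graph g.2)⟩

theorem sq_norm_graph_le (u : C.domain) :
    ‖(⟨((u : E), C u), C.mem_graph u⟩ : C.graph)‖ ^ 2 ≤ ‖(u : E)‖ ^ 2 + ‖C u‖ ^ 2 := by
  change ‖((u : E), C u)‖ ^ 2 ≤ _
  rw [Prod.norm_def]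
  rcases max_cases ‖(u : E)‖ ‖C u‖ with ⟨h, -⟩ | ⟨h, -⟩ <;> rw [h] <;>
    nlinarith [sq_nonneg ‖(u : E)‖, sq_nonneg ‖C u‖]

theorem continuous_onGraph_of_sq_le {K : ℝ}
    (h : ∀ u : C.domain, ‖D ⟨u, hdom u.2⟩‖ ^ 2 ≤ K * (‖(u : E)‖ ^ 2 + ‖C u‖ ^ 2)) :
    Continuous (D.onGraph hdom) := by
  refine AddMonoidHomClass.continuous_of_bound _ (√(2 * |K|)) fun g => ?_
  obtain ⟨⟨v, w⟩, hg⟩ := g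
  obtain ⟨u, rfl, rfl⟩ := C.mem_graph_iff.mp hg
  have hnorm : ‖(u : E)‖ ^ 2 + ‖C u‖ ^ 2 ≤ 2 * ‖(⟨((u : E), C u), hg⟩ : C.graph)‖ ^ 2 := by
    change _ ≤ 2 * ‖((u : E), C u)‖ ^ 2
    rw [Prod.norm_def]
    nlinarith [le_max_left ‖(u : E)‖ ‖C u‖, le_max_right ‖(u : E)‖ ‖C u‖, norm_nonneg (u : E),
      norm_nonneg (C u)]
  rw [← Real.sqrt_sq (norm_nonneg (⟨((u : E), C u), hg⟩ : C.graph)),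
    ← Real.sqrt_mul (by positivity)]
  refine Real.le_sqrt_of_sq_le ((h u).trans ?_)
  calc K * (‖(u : E)‖ ^ 2 + ‖C u‖ ^ 2) ≤ |K| * (2 * ‖(⟨((u : E), C u), hg⟩ : C.graph)‖ ^ 2) :=
        mul_le_mul (le_abs_self K) hnorm (by positivity) (abs_nonneg K)
    _ = _ := by ring

theorem continuous_onGraph_of_isClosed [CompleteSpace E] [CompleteSpace F] [CompleteSpace G]
    (hC : C.IsClosed) (hD : D.IsClosed) : Continuous (D.onGraph hdom) := by
  have : CompleteSpace C.graph := hC.completeSpace_coe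
  refine LinearMap.continuous_of_isClosed_graph _ ?_
  have hgraph : ((D.onGraph hdom).graph : Set (C.graph × G)) =
      (fun p : C.graph × G => ((p.1 : E × F).1, p.2)) ⁻¹' D.graph := by
    ext ⟨g, v⟩
    simp only [SetLike.mem_coe, LinearMap.mem_graph_iff, Set.mem_preimage]
    constructor
    · rintro rfl
      exact onGraph_mem_graph g
    · exact fun h => D.mem_graph_snd_inj h (onGraph_mem_graph g) rfl
  rw [hgraph]
  exact hD.preimage ((continuous_subtype_val.comp continuous_fst).fst.prodMk continuous_snd)

theorem mem_graph_of_hasSum {ι : Type*} (hD : Continuous (D.onGraph hdom)) {g : ι → C.graph}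
    (hg : Summable g) {u : E} {v : G} (hu : HasSum (fun i => (g i : E × F).1) u)
    (hv : HasSum (fun i => D.onGraph hdom (g i)) v) : ((u, v) : E × G) ∈ D.graph := by
  obtain ⟨s, hs⟩ := hg
  have hfst := hs.map (LinearMap.fst 𝕜 E F ∘ₗ C.graph.subtype)
    (continuous_fst.comp continuous_subtype_val)
  have hsnd := hs.map (D.onGraph hdom) hD
  rw [hu.unique hfst, hv.unique hsnd]
  exact onGraph_mem_graph s

theorem eq_of_forall_mem_graph {A : E →ₗ.[𝕜] F} {V : Submodule 𝕜 G} (hV : Dense (V : Set G))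
    (R : V → E) {T T' : G →L[𝕜] F} (hT : ∀ z : V, (R z, T z) ∈ A.graph)
    (hT' : ∀ z : V, (R z, T' z) ∈ A.graph) : T' = T :=
  ContinuousLinearMap.coeFn_injective <| T'.continuous.ext_on hV T.continuous fun z hz =>
    A.mem_graph_snd_inj (hT' ⟨z, hz⟩) (hT ⟨z, hz⟩) rfl

end LinearPMap

theorem LinearPMap.mem_graph_of_hasSum_rankOne {A B C : H →ₗ.[ℂ] H} (hC : C.IsClosed)
    (hAdom : C.domain ≤ A.domain) (hA : Continuous (A.onGraph hAdom))
    (hBdense : Dense (B.domain : Set H)) (hBdom : C.domain ≤ B.adjoint.domain)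
    (hB : Continuous (B.adjoint.onGraph hBdom)) {x y : ℕ → C.graph}
    (hx : Summable fun n => ‖x n‖ ^ 2) (hy : Summable fun n => ‖y n‖ ^ 2) {ρ T : H →L[ℂ] H}
    (hρ : HasSum (fun n => rankOne (x n : H × H).1 (y n : H × H).1) ρ)
    (hT : HasSum (fun n => rankOne (A.onGraph hAdom (x n)) (B.adjoint.onGraph hBdom (y n))) T)
    (z : B.domain) : (ρ (B z), T (z : H)) ∈ A.graph := by
  have : CompleteSpace C.graph := hC.completeSpace_coe
  let ΦB : C.graph →L[ℂ] H := ⟨B.adjoint.onGraph hBdom, hB⟩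
  have hadj (n : ℕ) : inner ℂ (ΦB (y n)) (z : H) = inner ℂ (y n : H × H).1 (B z) :=
    B.adjoint_isFormalAdjoint hBdense ⟨_, hBdom (mem_domain_of_mem_graph (y n).2)⟩ z
  have hsum : Summable fun n => inner ℂ (y n : H × H).1 (B z) • x n := by
    refine ((summable_mul_of_summable_sq (ΦB.summable_sq_norm_apply hy) hx).mul_left
      ‖(z : H)‖).of_norm_bounded fun n => ?_
    rw [norm_smul, ← hadj, ← mul_assoc, mul_comm ‖(z : H)‖]
    exact mul_le_mul_of_nonneg_right (norm_inner_le_norm _ _) (norm_nonneg _)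
  refine mem_graph_of_hasSum hA hsum (hρ.mapL (.apply ℂ H (B z))) ?_
  have hTz := hT.mapL (.apply ℂ H (z : H))
  simp only [ContinuousLinearMap.apply_apply, rankOne_apply] at hTz
  simp only [_root_.map_smul, ← hadj]
  exact hTz

theorem stmt_5_general
    (C : H →ₗ.[ℂ] H)
    (hsa : IsSelfAdjoint C)
    (A : H →ₗ.[ℂ] H) (hAdom : C.domain ≤ A.domain) (K : ℝ)
    (hAb : ∀ u : C.domain, ‖A ⟨(u : H), hAdom u.2⟩‖ ^ 2 ≤ K * (‖(u : H)‖ ^ 2 + ‖C u‖ ^ 2))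
    (B : H →ₗ.[ℂ] H) (hBdense : Dense (B.domain : Set H))
    (hBdom : C.domain ≤ B.adjoint.domain)
    (x y : ℕ → H) (hxd : ∀ n, x n ∈ C.domain) (hyd : ∀ n, y n ∈ C.domain)
    (hx : Summable fun n => ‖x n‖ ^ 2 + ‖C ⟨x n, hxd n⟩‖ ^ 2)
    (hy : Summable fun n => ‖y n‖ ^ 2 + ‖C ⟨y n, hyd n⟩‖ ^ 2)
    (ρ : H →L[ℂ] H) (hρ : HasSum (fun n => rankOne (x n) (y n)) ρ) :
    ∃ T : H →L[ℂ] H,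
      (∀ z : B.domain, (ρ (B z), T (z : H)) ∈ A.graph) ∧
      (∀ T' : H →L[ℂ] H, (∀ z : B.domain, (ρ (B z), T' (z : H)) ∈ A.graph) → T' = T) ∧
      HasSum (fun n =>
        rankOne (A ⟨x n, hAdom (hxd n)⟩) (B.adjoint ⟨y n, hBdom (hyd n)⟩)) T ∧
      traceNorm T ≠ ⊤ := by
  have hC : C.IsClosed := hsa.isClosed
  have hA : Continuous (A.onGraph hAdom) := LinearPMap.continuous_onGraph_of_sq_le hAb
  have hB : Continuous (B.adjoint.onGraph hBdom) :=
    LinearPMap.continuous_onGraph_of_isClosed hC (LinearPMap.adjoint_isClosed hBdense)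
  let gx (n : ℕ) : C.graph := ⟨_, C.mem_graph ⟨x n, hxd n⟩⟩
  let gy (n : ℕ) : C.graph := ⟨_, C.mem_graph ⟨y n, hyd n⟩⟩
  have hgx : Summable fun n => ‖gx n‖ ^ 2 :=
    hx.of_nonneg_of_le (fun _ => sq_nonneg _) fun _ => LinearPMap.sq_norm_graph_le _
  have hgy : Summable fun n => ‖gy n‖ ^ 2 :=
    hy.of_nonneg_of_le (fun _ => sq_nonneg _) fun _ => LinearPMap.sq_norm_graph_le _
  have hAB : Summable fun n => ‖A.onGraph hAdom (gx n)‖ * ‖B.adjoint.onGraph hBdom (gy n)‖ :=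
    summable_mul_of_summable_sq (ContinuousLinearMap.summable_sq_norm_apply ⟨_, hA⟩ hgx)
      (ContinuousLinearMap.summable_sq_norm_apply ⟨_, hB⟩ hgy)
  obtain ⟨T, hT⟩ := summable_rankOne hAB
  have hgraph := LinearPMap.mem_graph_of_hasSum_rankOne hC hAdom hA hBdense hBdom hB hgx hgy hρ hT
  exact ⟨T, hgraph, fun T' hT' => LinearPMap.eq_of_forall_mem_graph hBdense _ hgraph hT', hT,
    traceNorm_ne_top_of_hasSum_rankOne hT hAB⟩

/-- Let `C` be a self-adjoint nonnegative operator, `A` a linear operator relatively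
bounded with respect to `C`, and `B` a densely defined operator with `D(C) ⊆ D(B*)`.
If `x(n), y(n) ∈ D(C)` with `∑ₙ (‖x(n)‖² + ‖C x(n)‖²) < ∞`,
`∑ₙ (‖y(n)‖² + ‖C y(n)‖²) < ∞`, and `ρ = ∑ₙ |x(n)⟩⟨y(n)|`, then `A ρ B` (defined on
`D(B)`) has a unique bounded extension, which equals `∑ₙ |A x(n)⟩⟨B* y(n)|` and is trace
class. -/
theorem stmt_5 [TopologicalSpace.SeparableSpace H]
    (C : H →ₗ.[ℂ] H)
    (hsa : IsSelfAdjoint C)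
    (hnn : ∀ u : C.domain, 0 ≤ (inner ℂ ((u : H)) (C u) : ℂ).re)
    (A : H →ₗ.[ℂ] H) (hAdom : C.domain ≤ A.domain) (K : ℝ)
    (hAb : ∀ u : C.domain, ‖A ⟨(u : H), hAdom u.2⟩‖ ^ 2 ≤ K * (‖(u : H)‖ ^ 2 + ‖C u‖ ^ 2))
    (B : H →ₗ.[ℂ] H) (hBdense : Dense (B.domain : Set H))
    (hBdom : C.domain ≤ B.adjoint.domain)
    (x y : ℕ → H) (hxd : ∀ n, x n ∈ C.domain) (hyd : ∀ n, y n ∈ C.domain)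
    (hx : Summable fun n => ‖x n‖ ^ 2 + ‖C ⟨x n, hxd n⟩‖ ^ 2)
    (hy : Summable fun n => ‖y n‖ ^ 2 + ‖C ⟨y n, hyd n⟩‖ ^ 2)
    (ρ : H →L[ℂ] H) (hρ : HasSum (fun n => rankOne (x n) (y n)) ρ) :
    ∃ T : H →L[ℂ] H,
      (∀ z : B.domain, (ρ (B z), T (z : H)) ∈ A.graph) ∧
      (∀ T' : H →L[ℂ] H, (∀ z : B.domain, (ρ (B z), T' (z : H)) ∈ A.graph) → T' = T) ∧
      HasSum (fun n =>
        rankOne (A ⟨x n, hAdom (hxd n)⟩) (B.adjoint ⟨y n, hBdom (hyd n)⟩)) T ∧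
      traceNorm T ≠ ⊤ :=
  stmt_5_general C hsa A hAdom K hAb B hBdense hBdom x y hxd hyd hx hy ρ hρ
end

section
/- Let C be a self-adjoint nonnegative operator in a separable Hilbert space H, (pₙ) nonnegative reals, and (φₙ) unit vectors in D(C) with ∑ₙ pₙ < ∞ and ∑ₙ pₙ ‖C φₙ‖² < ∞; set ρ = ∑ₙ pₙ |φₙ⟩⟨φₙ| (convergent in trace norm). Then the unique bounded extension of C ρ C is trace class and its trace equals ∑ₙ pₙ ‖C φₙ‖². -/
open Filter Topology
open scoped ENNReal NNReal

variable {H : Type*} [NormedAddCommGroup H] [InnerProductSpace ℂ H] [CompleteSpace H]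

/-!
With `ψₙ = C φₙ`, the series `T = ∑ pₙ |ψₙ⟩⟨ψₙ|` converges absolutely in operator norm, since
`‖|ψ⟩⟨ψ|‖ = ‖ψ‖²`. Moving `C` across inner products by self-adjointness gives
`⟪C x, ρ (C z)⟫ = ⟪x, T z⟫` on `D(C)`, so `ρ (C z) ∈ D(C*) = D(C)` with `C (ρ (C z)) = T z`;
`T` is the only such bounded operator because `D(C)` is dense. Bessel's inequality and AM-GM bound
the trace norm of `|ψ⟩⟨ψ|` by `‖ψ‖²`, Parseval's identity gives its trace `‖ψ‖²`, and the two
series can be interchanged because all the terms `pₙ |⟪b i, ψₙ⟫|²` are nonnegative.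
-/

open scoped InnerProductSpace

theorem HasSum.tsum_comm_of_nonneg {α β : Type*} {f : α → β → ℝ} {g : α → ℝ} {s : ℝ}
    (hf : ∀ a b, 0 ≤ f a b) (hrow : ∀ a, HasSum (f a) (g a)) (hg : HasSum g s) :
    HasSum (fun b => ∑' a, f a b) s := by
  have hprod : Summable fun x : α × β => f x.1 x.2 :=
    (summable_prod_of_nonneg fun x => hf x.1 x.2).mpr
      ⟨fun a => (hrow a).summable, hg.summable.congr fun a => ((hrow a).tsum_eq).symm⟩
  have htotal : HasSum (fun x : α × β => f x.1 x.2) s := by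
    simpa only [(hprod.hasSum.prod_fiberwise hrow).unique hg] using hprod.hasSum
  exact ((Equiv.prodComm β α).hasSum_iff.mpr htotal).prod_fiberwise fun b =>
    (hprod.prod_symm.prod_factor b).hasSum

theorem ContinuousLinearMap.eq_of_mem_graph {R E F G : Type*} [Ring R] [AddCommGroup E]
    [Module R E] [AddCommGroup F] [Module R F] [TopologicalSpace F] [T2Space F]
    [AddCommGroup G] [Module R G] [TopologicalSpace G] {A : E →ₗ.[R] F} {D : Submodule R G}
    (hD : Dense (D : Set G)) (g : D → E) {T T' : G →L[R] F}
    (hT : ∀ z : D, (g z, T z) ∈ A.graph) (hT' : ∀ z : D, (g z, T' z) ∈ A.graph) : T = T' :=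
  DFunLike.coe_injective <| Continuous.ext_on hD T.continuous T'.continuous fun z hz =>
    A.mem_graph_snd_inj (hT ⟨z, hz⟩) (hT' ⟨z, hz⟩) rfl

section InnerProductSpace

variable {𝕜 E ι : Type*} [RCLike 𝕜] [NormedAddCommGroup E] [InnerProductSpace 𝕜 E]

theorem Orthonormal.sum_norm_inner_mul_norm_inner_le {e f : ι → E} (he : Orthonormal 𝕜 e)
    (hf : Orthonormal 𝕜 f) (s : Finset ι) (x : E) :
    ∑ k ∈ s, ‖⟪e k, x⟫_𝕜‖ * ‖⟪f k, x⟫_𝕜‖ ≤ ‖x‖ ^ 2 := by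
  have amgm : ∀ k, ‖⟪e k, x⟫_𝕜‖ * ‖⟪f k, x⟫_𝕜‖ ≤ (‖⟪e k, x⟫_𝕜‖ ^ 2 + ‖⟪f k, x⟫_𝕜‖ ^ 2) / 2 :=
    fun k => by nlinarith [sq_nonneg (‖⟪e k, x⟫_𝕜‖ - ‖⟪f k, x⟫_𝕜‖)]
  calc ∑ k ∈ s, ‖⟪e k, x⟫_𝕜‖ * ‖⟪f k, x⟫_𝕜‖
      ≤ (∑ k ∈ s, ‖⟪e k, x⟫_𝕜‖ ^ 2 + ∑ k ∈ s, ‖⟪f k, x⟫_𝕜‖ ^ 2) / 2 := by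
        rw [← Finset.sum_add_distrib, Finset.sum_div]
        exact Finset.sum_le_sum fun k _ => amgm k
    _ ≤ (‖x‖ ^ 2 + ‖x‖ ^ 2) / 2 := by
        gcongr
        exacts [he.sum_inner_products_le x, hf.sum_inner_products_le x]
    _ = ‖x‖ ^ 2 := by ring

theorem HilbertBasis.hasSum_norm_inner_sq [CompleteSpace E] (b : HilbertBasis ι 𝕜 E) (x : E) :
    HasSum (fun i => ‖⟪b i, x⟫_𝕜‖ ^ 2) (‖x‖ ^ 2) := by
  have h := b.hasSum_inner_mul_inner x x
  rw [inner_self_eq_norm_sq_to_K, ← RCLike.ofReal_pow] at h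
  refine (RCLike.hasSum_ofReal 𝕜).mp (h.congr_fun fun i => ?_)
  rw [← inner_conj_symm x, RCLike.conj_mul]
  norm_cast

variable [CompleteSpace E] {C : E →ₗ.[𝕜] E}

theorem IsSelfAdjoint.inner_map_left (hC : IsSelfAdjoint C) (u v : C.domain) :
    ⟪C u, v⟫_𝕜 = ⟪(u : E), C v⟫_𝕜 := by
  have h := LinearPMap.adjoint_isFormalAdjoint (T := C) hC.dense_domain
  rw [LinearPMap.isSelfAdjoint_def.mp hC] at h
  exact h u v

theorem IsSelfAdjoint.mem_graph_of_inner_eq (hC : IsSelfAdjoint C) {y w : E}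
    (h : ∀ x : C.domain, ⟪C x, y⟫_𝕜 = ⟪(x : E), w⟫_𝕜) : (y, w) ∈ C.graph := by
  have h' : ∀ x : C.domain, ⟪w, (x : E)⟫_𝕜 = ⟪y, C x⟫_𝕜 := fun x => by
    rw [← inner_conj_symm, ← h x, inner_conj_symm]
  have hy : y ∈ C.adjoint.domain := LinearPMap.mem_adjoint_domain_of_exists y ⟨w, h'⟩
  have hCy : C.adjoint ⟨y, hy⟩ = w := LinearPMap.adjoint_apply_eq hC.dense_domain _ h'
  rw [← LinearPMap.isSelfAdjoint_def.mp hC, ← hCy]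
  exact C.adjoint.mem_graph ⟨y, hy⟩

end InnerProductSpace

section RankOne

variable {α E : Type*} [NormedAddCommGroup E] [InnerProductSpace ℂ E]

theorem HasSum.inner_apply {A : α → E →L[ℂ] E} {T : E →L[ℂ] E} (h : HasSum A T) (x v : E) :
    HasSum (fun n => ⟪x, A n v⟫_ℂ) ⟪x, T v⟫_ℂ :=
  h.mapL ((innerSL ℂ x).comp (ContinuousLinearMap.apply ℂ E v))

theorem inner_smul_rankOne_self_apply (w : ℝ) (φ x v : E) :
    ⟪x, (w • rankOne φ φ) v⟫_ℂ = w * (⟪φ, v⟫_ℂ * ⟪x, φ⟫_ℂ) := by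
  simp [rankOne, Complex.real_smul]

theorem summable_smul_rankOne_self [CompleteSpace E] {w : α → ℝ} {ψ : α → E} (hw : ∀ n, 0 ≤ w n)
    (hs : Summable fun n => w n * ‖ψ n‖ ^ 2) :
    Summable fun n => w n • rankOne (ψ n) (ψ n) := by
  refine Summable.of_norm (hs.congr fun n => ?_)
  rw [norm_smul, rankOne, ContinuousLinearMap.norm_smulRight_apply, innerSL_apply_norm,
    Real.norm_of_nonneg (hw n), sq]

theorem traceNorm_le_of_hasSum_smul_rankOne {w : α → ℝ} {ψ : α → E} {T : E →L[ℂ] E}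
    (hw : ∀ n, 0 ≤ w n) (hs : Summable fun n => w n * ‖ψ n‖ ^ 2)
    (hT : HasSum (fun n => w n • rankOne (ψ n) (ψ n)) T) :
    traceNorm T ≤ ENNReal.ofReal (∑' n, w n * ‖ψ n‖ ^ 2) := by
  refine iSup_le fun m => iSup_le fun e => iSup_le fun f => iSup_le fun he => iSup_le fun hf => ?_
  have hentry : ∀ k, (‖⟪e k, T (f k)⟫_ℂ‖₊ : ℝ≥0∞)
      ≤ ∑' n, ENNReal.ofReal (w n * (‖⟪e k, ψ n⟫_ℂ‖ * ‖⟪f k, ψ n⟫_ℂ‖)) := fun k =>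
    (hT.inner_apply (e k) (f k)).enorm_le_of_bounded ENNReal.summable.hasSum fun n => by
      rw [inner_smul_rankOne_self_apply, ← ofReal_norm, norm_mul, norm_mul, norm_inner_symm,
        Complex.norm_real, Real.norm_of_nonneg (hw n), mul_comm ‖⟪f k, ψ n⟫_ℂ‖]
  have hrow : ∀ n, ∑ k, ENNReal.ofReal (w n * (‖⟪e k, ψ n⟫_ℂ‖ * ‖⟪f k, ψ n⟫_ℂ‖))
      ≤ ENNReal.ofReal (w n * ‖ψ n‖ ^ 2) := fun n => by
    rw [← ENNReal.ofReal_sum_of_nonneg fun k _ => mul_nonneg (hw n) (by positivity),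
      ← Finset.mul_sum]
    exact ENNReal.ofReal_le_ofReal
      (mul_le_mul_of_nonneg_left (he.sum_norm_inner_mul_norm_inner_le hf _ _) (hw n))
  calc ∑ k, (‖⟪e k, T (f k)⟫_ℂ‖₊ : ℝ≥0∞)
      ≤ ∑ k, ∑' n, ENNReal.ofReal (w n * (‖⟪e k, ψ n⟫_ℂ‖ * ‖⟪f k, ψ n⟫_ℂ‖)) :=
        Finset.sum_le_sum fun k _ => hentry k
    _ = ∑' n, ∑ k, ENNReal.ofReal (w n * (‖⟪e k, ψ n⟫_ℂ‖ * ‖⟪f k, ψ n⟫_ℂ‖)) :=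
        (Summable.tsum_finsetSum fun _ _ => ENNReal.summable).symm
    _ ≤ ∑' n, ENNReal.ofReal (w n * ‖ψ n‖ ^ 2) := ENNReal.tsum_le_tsum hrow
    _ = ENNReal.ofReal (∑' n, w n * ‖ψ n‖ ^ 2) :=
        (ENNReal.ofReal_tsum_of_nonneg (fun n => mul_nonneg (hw n) (by positivity)) hs).symm

theorem HilbertBasis.hasSum_inner_apply_of_hasSum_smul_rankOne {ι : Type*} [CompleteSpace E]
    (b : HilbertBasis ι ℂ E) {w : α → ℝ} {ψ : α → E} {T : E →L[ℂ] E}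
    (hw : ∀ n, 0 ≤ w n) (hs : Summable fun n => w n * ‖ψ n‖ ^ 2)
    (hT : HasSum (fun n => w n • rankOne (ψ n) (ψ n)) T) :
    HasSum (fun i => ⟪b i, T (b i)⟫_ℂ) ((∑' n, w n * ‖ψ n‖ ^ 2 : ℝ) : ℂ) := by
  have hdiag : ∀ i, HasSum (fun n => ((w n * ‖⟪b i, ψ n⟫_ℂ‖ ^ 2 : ℝ) : ℂ)) ⟪b i, T (b i)⟫_ℂ :=
    fun i => (hT.inner_apply (b i) (b i)).congr_fun fun n => by
      rw [inner_smul_rankOne_self_apply, ← inner_conj_symm (b i) (ψ n), Complex.mul_conj',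
        Complex.norm_conj]
      norm_cast
  have hcol : ∀ i, HasSum (fun n => w n * ‖⟪b i, ψ n⟫_ℂ‖ ^ 2) (∑' n, w n * ‖⟪b i, ψ n⟫_ℂ‖ ^ 2) :=
    fun i => (Complex.summable_ofReal.mp (hdiag i).summable).hasSum
  have htrace : HasSum (fun i => ∑' n, w n * ‖⟪b i, ψ n⟫_ℂ‖ ^ 2) (∑' n, w n * ‖ψ n‖ ^ 2) :=
    HasSum.tsum_comm_of_nonneg (fun n i => mul_nonneg (hw n) (by positivity))
      (fun n => (b.hasSum_norm_inner_sq (ψ n)).mul_left (w n)) hs.hasSum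
  exact (Complex.hasSum_ofReal.mpr htrace).congr_fun fun i =>
    (hdiag i).unique (Complex.hasSum_ofReal.mpr (hcol i))

theorem IsSelfAdjoint.mem_graph_of_hasSum_smul_rankOne [CompleteSpace E] {C : E →ₗ.[ℂ] E}
    (hC : IsSelfAdjoint C) {w : α → ℝ} (φ : α → C.domain) {ρ T : E →L[ℂ] E}
    (hρ : HasSum (fun n => w n • rankOne (φ n : E) (φ n)) ρ)
    (hT : HasSum (fun n => w n • rankOne (C (φ n)) (C (φ n))) T) (z : C.domain) :
    (ρ (C z), T z) ∈ C.graph :=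
  hC.mem_graph_of_inner_eq fun x =>
    (hρ.inner_apply (C x) (C z)).unique <| (hT.inner_apply x z).congr_fun fun n => by
      rw [inner_smul_rankOne_self_apply, inner_smul_rankOne_self_apply, hC.inner_map_left x,
        hC.inner_map_left (φ n) z]

end RankOne

theorem stmt_9_general {ι : Type*} (b : HilbertBasis ι ℂ H)
    (C : H →ₗ.[ℂ] H)
    (hsa : IsSelfAdjoint C)
    (p : ℕ → ℝ) (hp : ∀ n, 0 ≤ p n)
    (φ : ℕ → H) (hφd : ∀ n, φ n ∈ C.domain)
    (hC : Summable fun n => p n * ‖C ⟨φ n, hφd n⟩‖ ^ 2)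
    (ρ : H →L[ℂ] H) (hρ : HasSum (fun n => p n • rankOne (φ n) (φ n)) ρ) :
    ∃ T : H →L[ℂ] H,
      (∀ z : C.domain, (ρ (C z), T (z : H)) ∈ C.graph) ∧
      (∀ T' : H →L[ℂ] H, (∀ z : C.domain, (ρ (C z), T' (z : H)) ∈ C.graph) → T' = T) ∧
      traceNorm T ≠ ⊤ ∧
      ∑' i, (inner ℂ (b i) (T (b i)) : ℂ) = ((∑' n, p n * ‖C ⟨φ n, hφd n⟩‖ ^ 2 : ℝ) : ℂ) := by
  obtain ⟨T, hT⟩ := summable_smul_rankOne_self hp hC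
  have hgraph : ∀ z : C.domain, (ρ (C z), T z) ∈ C.graph :=
    hsa.mem_graph_of_hasSum_smul_rankOne (fun n => ⟨φ n, hφd n⟩) hρ hT
  refine ⟨T, hgraph,
    fun T' hT' => ContinuousLinearMap.eq_of_mem_graph hsa.dense_domain _ hT' hgraph,
    ne_top_of_le_ne_top ENNReal.ofReal_ne_top (traceNorm_le_of_hasSum_smul_rankOne hp hC hT),
    (b.hasSum_inner_apply_of_hasSum_smul_rankOne hp hC hT).tsum_eq⟩

/-- Let `C` be a self-adjoint nonnegative operator with dense domain, `(pₙ)` nonnegative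
reals and `(φₙ)` unit vectors of `D(C)` with `∑ₙ pₙ < ∞` and `∑ₙ pₙ ‖C φₙ‖² < ∞`, and
`ρ = ∑ₙ pₙ |φₙ⟩⟨φₙ|`.  Then `C ρ C` has a unique bounded extension `T`, `T` is trace
class, and its trace (computed in any Hilbert basis) equals `∑ₙ pₙ ‖C φₙ‖²`. -/
theorem stmt_9 [TopologicalSpace.SeparableSpace H] {ι : Type*} (b : HilbertBasis ι ℂ H)
    (C : H →ₗ.[ℂ] H)
    (hsa : IsSelfAdjoint C)
    (hnn : ∀ u : C.domain, 0 ≤ (inner ℂ ((u : H)) (C u) : ℂ).re)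
    (p : ℕ → ℝ) (hp : ∀ n, 0 ≤ p n) (hpsum : Summable p)
    (φ : ℕ → H) (hφd : ∀ n, φ n ∈ C.domain) (hφ : ∀ n, ‖φ n‖ = 1)
    (hC : Summable fun n => p n * ‖C ⟨φ n, hφd n⟩‖ ^ 2)
    (ρ : H →L[ℂ] H) (hρ : HasSum (fun n => p n • rankOne (φ n) (φ n)) ρ) :
    ∃ T : H →L[ℂ] H,
      (∀ z : C.domain, (ρ (C z), T (z : H)) ∈ C.graph) ∧
      (∀ T' : H →L[ℂ] H, (∀ z : C.domain, (ρ (C z), T' (z : H)) ∈ C.graph) → T' = T) ∧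
      traceNorm T ≠ ⊤ ∧
      ∑' i, (inner ℂ (b i) (T (b i)) : ℂ) = ((∑' n, p n * ‖C ⟨φ n, hφd n⟩‖ ^ 2 : ℝ) : ℂ) :=
  stmt_9_general b C hsa p hp φ hφd hC ρ hρ
end

section
/- Let H be a Hilbert space and (x_t)_{t ∈ I} a family in L²(ℕ; H) indexed by an interval I such that ‖x_t‖ = 1 for every t and for each n ∈ ℕ the map t ↦ x_t(n) ∈ H is continuous. Then t ↦ x_t is continuous from I into L²(ℕ; H) (with the norm topology). -/
/-!
Pairing with a fixed `y ∈ ℓ²` is a uniform limit, on any set where `‖x_t‖` is bounded, of the finite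
sums `∑_{n ∈ F} ⟪y n, x_t n⟫`, which are continuous in `t`; so `t ↦ ⟪x_{t₀}, x_t⟫` is continuous.
Since `‖x_t‖ = 1`, `‖x_t - x_{t₀}‖² = 2 - 2 Re ⟪x_{t₀}, x_t⟫ → 0`: weak convergence together with
convergence of norms gives norm convergence.
-/

open Filter Topology

section InnerProductSpace

variable {𝕜 E : Type*} [RCLike 𝕜] [NormedAddCommGroup E] [InnerProductSpace 𝕜 E]

theorem tendstoUniformlyOn_inner_of_tendsto_of_norm_le {ι X : Type*} {l : Filter ι}
    {p : ι → E} {y : E} (hp : Tendsto p l (𝓝 y)) {f : X → E} {s : Set X} {C : ℝ}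
    (hf : ∀ t ∈ s, ‖f t‖ ≤ C) :
    TendstoUniformlyOn (fun i t => inner 𝕜 (p i) (f t)) (fun t => inner 𝕜 y (f t)) l s := by
  rw [Metric.tendstoUniformlyOn_iff]
  intro ε hε
  have hsmall : Tendsto (fun i => ‖y - p i‖ * C) l (𝓝 0) := by
    simpa using ((hp.const_sub y).norm.mul_const C)
  filter_upwards [hsmall.eventually (gt_mem_nhds hε)] with i hi t ht
  calc dist (inner 𝕜 y (f t)) (inner 𝕜 (p i) (f t))
      = ‖inner 𝕜 (y - p i) (f t)‖ := by rw [dist_eq_norm, inner_sub_left]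
    _ ≤ ‖y - p i‖ * ‖f t‖ := norm_inner_le_norm _ _
    _ ≤ ‖y - p i‖ * C := by gcongr; exact hf t ht
    _ < ε := hi

theorem tendsto_of_tendsto_inner_of_tendsto_norm {α : Type*} {l : Filter α} {f : α → E} {a : E}
    (hinner : Tendsto (fun t => inner 𝕜 a (f t)) l (𝓝 (inner 𝕜 a a)))
    (hnorm : Tendsto (fun t => ‖f t‖) l (𝓝 ‖a‖)) :
    Tendsto f l (𝓝 a) := by
  have hsq : Tendsto (fun t => ‖f t - a‖ ^ 2) l (𝓝 0) := by
    have hre : Tendsto (fun t => RCLike.re (inner 𝕜 (f t) a)) l (𝓝 (‖a‖ ^ 2)) := by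
      have := (RCLike.continuous_re.tendsto _).comp hinner
      simpa [Function.comp_def, inner_re_symm (𝕜 := 𝕜) a, ← norm_sq_eq_re_inner] using this
    have := (hnorm.pow 2).sub (hre.const_mul 2) |>.add_const (‖a‖ ^ 2)
    simp only [norm_sub_sq (𝕜 := 𝕜)]
    convert this using 2
    ring
  rw [tendsto_iff_norm_sub_tendsto_zero]
  simpa [Real.sqrt_sq (norm_nonneg _)] using hsq.sqrt

end InnerProductSpace

theorem lp.continuousOn_inner_of_continuousOn_apply {𝕜 ι X : Type*} [RCLike 𝕜]
    {G : ι → Type*} [∀ i, NormedAddCommGroup (G i)] [∀ i, InnerProductSpace 𝕜 (G i)]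
    [TopologicalSpace X] {s : Set X} {x : X → lp G 2} {C : ℝ} (hbound : ∀ t ∈ s, ‖x t‖ ≤ C)
    (hcoord : ∀ i, ContinuousOn (fun t => x t i) s) (y : lp G 2) :
    ContinuousOn (fun t => inner 𝕜 y (x t)) s := by
  classical
  have hunif := tendstoUniformlyOn_inner_of_tendsto_of_norm_le (𝕜 := 𝕜)
    (lp.hasSum_single (by norm_num) y) hbound
  refine hunif.continuousOn (Frequently.of_forall fun F => ?_)
  simp only [sum_inner, lp.inner_single_left]
  exact continuousOn_finsetSum F fun i _ => continuousOn_const.inner (hcoord i)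

variable {H : Type*} [NormedAddCommGroup H] [InnerProductSpace ℂ H] [CompleteSpace H]

theorem stmt_13_general (I : Set ℝ)
    (x : ℝ → lp (fun _ : ℕ => H) 2)
    (hnorm : ∀ t ∈ I, ‖x t‖ = 1)
    (hcoord : ∀ n : ℕ, ContinuousOn (fun t => (x t : ∀ _ : ℕ, H) n) I) :
    ContinuousOn x I := by
  intro t₀ ht₀
  have hinner := lp.continuousOn_inner_of_continuousOn_apply (𝕜 := ℂ)
    (fun t ht => (hnorm t ht).le) hcoord (x t₀) t₀ ht₀
  refine tendsto_of_tendsto_inner_of_tendsto_norm hinner (tendsto_const_nhds.congr' ?_)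
  filter_upwards [self_mem_nhdsWithin] with t ht
  rw [hnorm t ht, hnorm t₀ ht₀]

/-- Let `(x_t)_{t ∈ I}` be a family in `L²(ℕ; H)` indexed by an interval `I ⊆ ℝ` such that
`‖x_t‖ = 1` for every `t ∈ I` and each coordinate map `t ↦ x_t(n)` is continuous on `I`.
Then `t ↦ x_t` is continuous on `I` for the norm topology of `L²(ℕ; H)`. -/
theorem stmt_13 (I : Set ℝ) (hI : I.OrdConnected)
    (x : ℝ → lp (fun _ : ℕ => H) 2)
    (hnorm : ∀ t ∈ I, ‖x t‖ = 1)
    (hcoord : ∀ n : ℕ, ContinuousOn (fun t => (x t : ∀ _ : ℕ, H) n) I) :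
    ContinuousOn x I :=
  stmt_13_general I x hnorm hcoord
end
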